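/- arXiv:1304.5088 — 3 statements merged into one kernel-verified Lean document; each statement's English description precedes it below -/
import Mathlib

section
/- Fix a test point m and a base-station site n. Assume the transmit powers P_t are nonnegative for all sites t, the propagation gains h_{m,t} are nonnegative for all t, the thermal noise power δ_m is strictly positive, the QoS threshold γ_m is nonnegative, the resource bound B is a positive real, and the assignment variables p_{j,t} take values in {0,1} with Σ_{j∈M} p_{j,t} ≤ B for every site t. Then the nonlinear QoS constraint SINR_{m,n} ≥ p_{m,n}·γ_m holds if and only if the linear inequality M_{m,n}·(1 − p_{m,n}) + P_n·h_{m,n}·p_{m,n} ≥ γ_m·( B⁻¹·Σ_{t≠n} Σ_{j∈M} p_{j,t}·P_t·h_{m,t} + δ_m ) holds. -/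
open Finset

/-- Equivalence between the nonlinear QoS constraint
`SINR_{m,n} ≥ p_{m,n}·γ_m` and its big-M linearization. Here `M` is the type of
test points, `N` the type of candidate base-station sites, `P t` the transmit
power of site `t`, `h t` the propagation gain `h_{m,t}` between the fixed test
point `m` and site `t`, `δ` the thermal noise power `δ_m`, `γ` the SINR
requirement `γ_m`, `B` the total number of radio resources per base station and
`p j t ∈ {0,1}` the assignment variables. -/
theorem qos_linearization_iff {M N : Type*} [Fintype M] [Fintype N] [DecidableEq N]
    (P h : N → ℝ) (δ γ B : ℝ) (p : M → N → ℝ) (m : M) (n : N)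
    (hP : ∀ t, 0 ≤ P t) (hh : ∀ t, 0 ≤ h t) (hδ : 0 < δ) (hγ : 0 ≤ γ) (hB : 0 < B)
    (hbin : ∀ j t, p j t = 0 ∨ p j t = 1)
    (hres : ∀ t, (∑ j, p j t) ≤ B) :
    (P n * h n / ((∑ t ∈ Finset.univ.erase n, (B⁻¹ * ∑ j, p j t) * P t * h t) + δ)
        ≥ p m n * γ)
    ↔ (γ * ((∑ t ∈ Finset.univ.erase n, P t * h t) + δ)) * (1 - p m n)
        + P n * h n * p m n
      ≥ γ * (B⁻¹ * (∑ t ∈ Finset.univ.erase n, ∑ j, p j t * P t * h t) + δ) := by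

  have hpt : ∀ t, 0 ≤ ∑ j, p j t := fun t => Finset.sum_nonneg fun j _ => by
    rcases hbin j t with h0 | h0 <;> simp [h0]
  set S := ∑ t ∈ Finset.univ.erase n, (B⁻¹ * ∑ j, p j t) * P t * h t with hSdef
  have key : B⁻¹ * (∑ t ∈ Finset.univ.erase n, ∑ j, p j t * P t * h t) = S := by
    rw [hSdef, Finset.mul_sum]
    refine Finset.sum_congr rfl fun t _ => ?_
    rw [show (∑ j, p j t * P t * h t) = (∑ j, p j t) * P t * h t by
      rw [Finset.sum_mul, Finset.sum_mul]]
    ring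
  have hSnn : 0 ≤ S := Finset.sum_nonneg fun t _ =>
    mul_nonneg (mul_nonneg (mul_nonneg (inv_nonneg.2 hB.le) (hpt t)) (hP t)) (hh t)
  have hD : 0 < S + δ := add_pos_of_nonneg_of_pos hSnn hδ
  have hTle : S ≤ ∑ t ∈ Finset.univ.erase n, P t * h t := by
    refine Finset.sum_le_sum fun t _ => ?_
    have h1 : B⁻¹ * ∑ j, p j t ≤ 1 := by
      have := mul_le_mul_of_nonneg_left (hres t) (inv_nonneg.2 hB.le)
      rwa [inv_mul_cancel₀ hB.ne'] at this
    nlinarith [mul_nonneg (hP t) (hh t), mul_nonneg (inv_nonneg.2 hB.le) (hpt t)]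
  rw [key]
  rcases hbin m n with h0 | h1
  · rw [h0]
    simp only [zero_mul, mul_zero, sub_zero, mul_one, add_zero, ge_iff_le]
    constructor
    · intro _
      nlinarith [mul_le_mul_of_nonneg_left (add_le_add_right hTle δ) hγ]
    · intro _
      exact div_nonneg (mul_nonneg (hP n) (hh n)) hD.le
  · rw [h1]
    simp only [one_mul, mul_one, sub_self, mul_zero, zero_add, ge_iff_le]
    rw [le_div_iff₀ hD]
end

section
/- (Proposition 2.) Suppose (b*, p*, P*) is an optimal solution of the QoS-aware base-station deployment problem: it minimizes the cost C₁(b, P) := Σ_{n∈N} c_n·b_n + λ·T·Σ_{n∈N} P_n^{(g)}·b_n over all tuples (b, p, P^{(g)}) with b_n ∈ {0,1}, p_{m,n} ∈ {0,1}, P_n^{(g)} ≥ 0 that satisfy the deployment constraints p_{m,n} ≤ b_n for all m, n; Σ_{n∈N} p_{m,n} = 1 for all m ∈ M; Σ_{m∈M} p_{m,n} ≤ B·b_n for all n ∈ N; the linearized QoS constraints M_{m,n}·(1 − p_{m,n}) + P_n·h_{m,n}·p_{m,n} ≥ γ_m·( B⁻¹·Σ_{t≠n} Σ_{j∈M} p_{j,t}·P_t·h_{m,t}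 + δ_m ) for all m, n; and the power-outage constraints b_n·( Σ_{m∈M} p_{m,n}·P_n + P_n^{(o)} − P_n^{(g)} − I_n ) ≤ 0 for all n ∈ N. Assume λ·T > 0. Then for every n ∈ N, the optimal grid power satisfies P_n^{(g)*}·b_n* = max{ −Δ_n(p*)·b_n*, 0 }, where Δ_n(p) := −Σ_{m∈M} p_{m,n}·P_n − P_n^{(o)} + I_n. -/
open Finset

/-- Total cost `C₁(b, P) = ∑ c_n·b_n + λ·T·∑ P_n^{(g)}·b_n` of the QoS-aware
base-station deployment problem (7). -/
def deployCost {N : Type*} [Fintype N] (c : N → ℝ) (lam T : ℝ)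
    (b Pg : N → ℝ) : ℝ :=
  (∑ n, c n * b n) + lam * T * ∑ n, Pg n * b n

/-- `Δ_n(p) = −∑_{m∈M} p_{m,n}·P_n − P_n^{(o)} + I_n`, the remaining renewable
energy at site `n` after transmission and operation. -/
def remEnergy {M N : Type*} [Fintype M] (P Po I : N → ℝ)
    (p : M → N → ℝ) (n : N) : ℝ :=
  -(∑ m, p m n * P n) - Po n + I n

/-- Feasibility for problem (7): Boolean deployment and assignment variables,
nonnegative grid power, the deployment constraints (1)–(3), the linearized QoS
constraints (4), and the power-outage constraints (7c). -/
def DeployFeasible {M N : Type*} [Fintype M] [Fintype N] [DecidableEq N]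
    (P Po I : N → ℝ) (h : M → N → ℝ) (δ γ : M → ℝ) (B : ℝ)
    (b : N → ℝ) (p : M → N → ℝ) (Pg : N → ℝ) : Prop :=
  (∀ n, b n = 0 ∨ b n = 1) ∧
  (∀ m n, p m n = 0 ∨ p m n = 1) ∧
  (∀ n, 0 ≤ Pg n) ∧
  (∀ m n, p m n ≤ b n) ∧
  (∀ m, (∑ n, p m n) = 1) ∧
  (∀ n, (∑ m, p m n) ≤ B * b n) ∧
  (∀ m n, (γ m * ((∑ t ∈ Finset.univ.erase n, P t * h m t) + δ m)) * (1 - p m n)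
      + P n * h m n * p m n
      ≥ γ m * (B⁻¹ * (∑ t ∈ Finset.univ.erase n, ∑ j, p j t * P t * h m t) + δ m)) ∧
  (∀ n, b n * ((∑ m, p m n * P n) + Po n - Pg n - I n) ≤ 0)

/-- **Proposition 2.** If `(b*, p*, P*)` is an optimal solution of
the QoS-aware deployment problem (7) and `λ·T > 0`, then for every site `n` the
optimal grid power satisfies `P_n^{(g)*}·b_n* = max{ −Δ_n(p*)·b_n*, 0 }`. -/
theorem optimal_grid_power {M N : Type*} [Fintype M] [Fintype N] [DecidableEq N]
    (c P Po I : N → ℝ) (lam T : ℝ) (h : M → N → ℝ) (δ γ : M → ℝ) (B : ℝ)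
    (hc : ∀ n, 0 ≤ c n) (hP : ∀ n, 0 ≤ P n) (hPo : ∀ n, 0 ≤ Po n)
    (hlamT : 0 < lam * T)
    (bs : N → ℝ) (ps : M → N → ℝ) (Pgs : N → ℝ)
    (hfeas : DeployFeasible P Po I h δ γ B bs ps Pgs)
    (hopt : ∀ b p Pg, DeployFeasible P Po I h δ γ B b p Pg →
      deployCost c lam T bs Pgs ≤ deployCost c lam T b Pg) :
    ∀ n, Pgs n * bs n = max (-(remEnergy P Po I ps n) * bs n) 0 := by
  intro n
  obtain ⟨hb, hp, hPg, h4, h5, h6, h7, h8⟩ := hfeas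
  rcases hb n with h0 | h1
  · simp [h0]
  · -- bs n = 1
    have hΔ : remEnergy P Po I ps n = -(∑ m, ps m n * P n) - Po n + I n := rfl
    -- lower bound: Pgs n ≥ max(-Δ, 0)
    have hge : max (-(remEnergy P Po I ps n)) 0 ≤ Pgs n := by
      have := h8 n
      rw [h1, one_mul] at this
      have : -(remEnergy P Po I ps n) ≤ Pgs n := by
        rw [hΔ]; linarith
      exact max_le this (hPg n)
    -- upper bound via optimality with modified Pg
    set v := max (-(remEnergy P Po I ps n)) 0 with hv
    have hvnn : 0 ≤ v := le_max_right _ _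
    have hfeas' : DeployFeasible P Po I h δ γ B bs ps (Function.update Pgs n v) := by
      refine ⟨hb, hp, ?_, h4, h5, h6, h7, ?_⟩
      · intro t
        rcases eq_or_ne t n with rfl | ht
        · simpa using hvnn
        · simpa [Function.update_of_ne ht] using hPg t
      · intro t
        rcases eq_or_ne t n with rfl | ht
        · rw [Function.update_self, h1, one_mul]
          have : -(remEnergy P Po I ps t) ≤ v := le_max_left _ _
          rw [hΔ] at this
          linarith
        · simpa [Function.update_of_ne ht] using h8 t
    have hle := hopt bs ps (Function.update Pgs n v) hfeas'
    unfold deployCost at hle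
    have hsum : ∑ t, Pgs t * bs t ≤ ∑ t, Function.update Pgs n v t * bs t :=
      le_of_mul_le_mul_left (by linarith) hlamT
    have hsplit : ∀ f : N → ℝ, ∑ t, f t * bs t = f n * bs n + ∑ t ∈ Finset.univ.erase n, f t * bs t := by
      intro f
      rw [← Finset.add_sum_erase _ _ (Finset.mem_univ n)]
    rw [hsplit Pgs, hsplit (Function.update Pgs n v)] at hsum
    have hrest : ∑ t ∈ Finset.univ.erase n, Function.update Pgs n v t * bs t
        = ∑ t ∈ Finset.univ.erase n, Pgs t * bs t := by
      apply Finset.sum_congr rfl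
      intro t ht
      rw [Function.update_of_ne (Finset.ne_of_mem_erase ht)]
    rw [hrest, Function.update_self] at hsum
    have hle2 : Pgs n ≤ v := by
      rw [h1, mul_one, mul_one] at hsum; linarith
    have : Pgs n = v := le_antisymm hle2 hge
    rw [h1, mul_one, mul_one, this]
end

section
/- Assume λ·T > 0 and c_n ≥ 0 for all n, and let S be any set of pairs (b, p) of binary vectors b_n ∈ {0,1}, p_{m,n} ∈ {0,1} (representing the constraints (7b) that do not involve grid power). Then (b*, p*) minimizes the reduced objective λ·T·Σ_{n∈N} max{ c_n/(λ·T) − Δ_n(p), c_n/(λ·T) }·b_n over S if and only if the tuple (b*, p*, P*) with P_n^{(g)*} := max{ −Δ_n(p*), 0 } minimizes C₁(b, P) := Σ_{n∈N} c_n·b_n + λ·T·Σ_{n∈N} P_n^{(g)}·b_n over all (b, p) ∈ S and all P^{(g)} ∈ ℝ^N satisfying P_n^{(g)} ≥ 0 and b_n·( Σ_{m∈M} p_{m,n}·P_n + P_n^{(o)} − P_n^{(g)} − I_n ) ≤ 0 for all n ∈ N; moreover the two minimum values coincide. -/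
open Finset

/-- The reduced objective (9):
`λ·T·∑_n max{c_n/(λ·T) − Δ_n(p), c_n/(λ·T)}·b_n`. -/
noncomputable def reducedCost {M N : Type*} [Fintype M] [Fintype N] (c P Po I : N → ℝ)
    (lam T : ℝ) (b : N → ℝ) (p : M → N → ℝ) : ℝ :=
  lam * T * ∑ n, max (c n / (lam * T) - remEnergy P Po I p n)
    (c n / (lam * T)) * b n

/-! The grid power `max (-Δ_n) 0` is the least `P_n^{(g)} ≥ 0` meeting the outage constraint
at an installed site, so for fixed `(b, p)` it minimises `C₁` termwise; substituting it turns
`C₁` into the reduced objective, so both problems are minimisations of the same function of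
`(b, p)`. -/

section GridPower

variable {b d g : ℝ}

lemma mul_neg_sub_max_neg_zero_nonpos (hb : 0 ≤ b) : b * (-d - max (-d) 0) ≤ 0 :=
  mul_nonpos_of_nonneg_of_nonpos hb (by linarith [le_max_left (-d) 0])

lemma max_neg_zero_mul_le (hb : 0 ≤ b) (hg : 0 ≤ g) (h : b * (-d - g) ≤ 0) :
    max (-d) 0 * b ≤ g * b := by
  rcases hb.eq_or_lt with rfl | hb
  · simp
  · have : -d ≤ g := by nlinarith
    exact mul_le_mul_of_nonneg_right (max_le this hg) hb.le

end GridPower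

lemma load_sub_eq_neg_remEnergy_sub {M N : Type*} [Fintype M] (P Po I : N → ℝ)
    (p : M → N → ℝ) (n : N) (g : ℝ) :
    (∑ m, p m n * P n) + Po n - g - I n = -remEnergy P Po I p n - g := by
  unfold remEnergy
  ring

lemma gridPower_feasible {M N : Type*} [Fintype M] (P Po I : N → ℝ) {b : N → ℝ}
    (hb : ∀ n, 0 ≤ b n) (p : M → N → ℝ) (n : N) :
    b n * ((∑ m, p m n * P n) + Po n - max (-(remEnergy P Po I p n)) 0 - I n) ≤ 0 := by
  rw [load_sub_eq_neg_remEnergy_sub]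
  exact mul_neg_sub_max_neg_zero_nonpos (hb n)

section Costs

variable {M N : Type*} [Fintype M] [Fintype N] (c P Po I : N → ℝ) (lam T : ℝ)

lemma reducedCost_eq_deployCost (h : lam * T ≠ 0) (b : N → ℝ) (p : M → N → ℝ) :
    reducedCost c P Po I lam T b p
      = deployCost c lam T b (fun n => max (-(remEnergy P Po I p n)) 0) := by
  unfold reducedCost deployCost
  rw [mul_sum, mul_sum, ← sum_add_distrib]
  refine sum_congr rfl fun n _ => ?_
  have hmax : ∀ x y : ℝ, max (x + y) x = x + max y 0 := fun x y => by
    rw [← max_add_add_left, add_zero]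
  rw [sub_eq_add_neg, hmax, add_mul, mul_add, ← mul_assoc, mul_div_cancel₀ _ h]

lemma deployCost_gridPower_le {b : N → ℝ} (hb : ∀ n, 0 ≤ b n) (hlamT : 0 ≤ lam * T)
    (p : M → N → ℝ) {Pg : N → ℝ} (hPg : ∀ n, 0 ≤ Pg n)
    (hcon : ∀ n, b n * ((∑ m, p m n * P n) + Po n - Pg n - I n) ≤ 0) :
    deployCost c lam T b (fun n => max (-(remEnergy P Po I p n)) 0)
      ≤ deployCost c lam T b Pg := by
  refine add_le_add_right (mul_le_mul_of_nonneg_left (sum_le_sum fun n _ => ?_) hlamT) _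
  refine max_neg_zero_mul_le (hb n) (hPg n) ?_
  rw [← load_sub_eq_neg_remEnergy_sub]
  exact hcon n

end Costs

lemma nonneg_of_eq_zero_or_eq_one {x : ℝ} (h : x = 0 ∨ x = 1) : 0 ≤ x := by
  rcases h with rfl | rfl <;> norm_num

theorem reduced_problem_equiv_general {M N : Type*} [Fintype M] [Fintype N]
    (c P Po I : N → ℝ) (lam T : ℝ)
    (hlamT : 0 < lam * T)
    (S : Set ((N → ℝ) × (M → N → ℝ)))
    (hSbin : ∀ q ∈ S, (∀ n, q.1 n = 0 ∨ q.1 n = 1) ∧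
      (∀ m n, q.2 m n = 0 ∨ q.2 m n = 1))
    (bs : N → ℝ) (ps : M → N → ℝ) (hmem : (bs, ps) ∈ S) :
    ((∀ q ∈ S, reducedCost c P Po I lam T bs ps ≤ reducedCost c P Po I lam T q.1 q.2)
      ↔ ((∀ n, 0 ≤ max (-(remEnergy P Po I ps n)) 0) ∧
         (∀ n, bs n * ((∑ m, ps m n * P n) + Po n
            - max (-(remEnergy P Po I ps n)) 0 - I n) ≤ 0) ∧
         (∀ q ∈ S, ∀ Pg : N → ℝ, (∀ n, 0 ≤ Pg n) →
            (∀ n, q.1 n * ((∑ m, q.2 m n * P n) + Po n - Pg n - I n) ≤ 0) →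
            deployCost c lam T bs (fun n => max (-(remEnergy P Po I ps n)) 0)
              ≤ deployCost c lam T q.1 Pg)))
    ∧ reducedCost c P Po I lam T bs ps
      = deployCost c lam T bs (fun n => max (-(remEnergy P Po I ps n)) 0) := by
  have hcost := reducedCost_eq_deployCost (M := M) c P Po I lam T hlamT.ne'
  have hnonneg : ∀ q ∈ S, ∀ n, 0 ≤ q.1 n := fun q hq n =>
    nonneg_of_eq_zero_or_eq_one ((hSbin q hq).1 n)
  refine ⟨⟨fun hmin => ?_, fun ⟨_, _, hmin⟩ q hq => ?_⟩, hcost bs ps⟩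
  · refine ⟨fun n => le_max_right _ _,
      gridPower_feasible P Po I (hnonneg _ hmem) ps, fun q hq Pg hPg hcon => ?_⟩
    calc _ = reducedCost c P Po I lam T bs ps := (hcost bs ps).symm
      _ ≤ reducedCost c P Po I lam T q.1 q.2 := hmin q hq
      _ = _ := hcost q.1 q.2
      _ ≤ deployCost c lam T q.1 Pg :=
        deployCost_gridPower_le c P Po I lam T (hnonneg q hq) hlamT.le q.2 hPg hcon
  · rw [hcost, hcost]
    exact hmin q hq _ (fun n => le_max_right _ _)
      (gridPower_feasible P Po I (hnonneg q hq) q.2)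

/-- Let `S` be any set of pairs `(b, p)` of binary vectors
(encoding the constraints (7b) not involving grid power), `λ·T > 0`, `c ≥ 0`,
and `(b*, p*) ∈ S`. Then `(b*, p*)` minimizes the reduced objective (9) over
`S` iff the tuple `(b*, p*, P*)` with `P_n^{(g)*} = max{−Δ_n(p*), 0}` minimizes
`C₁` over all `(b, p) ∈ S` and all grid powers `P^{(g)}` satisfying
nonnegativity and the power-outage constraints; moreover the two minimum values
coincide. -/
theorem reduced_problem_equiv {M N : Type*} [Fintype M] [Fintype N]
    (c P Po I : N → ℝ) (lam T : ℝ)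
    (hc : ∀ n, 0 ≤ c n) (hlamT : 0 < lam * T)
    (S : Set ((N → ℝ) × (M → N → ℝ)))
    (hSbin : ∀ q ∈ S, (∀ n, q.1 n = 0 ∨ q.1 n = 1) ∧
      (∀ m n, q.2 m n = 0 ∨ q.2 m n = 1))
    (bs : N → ℝ) (ps : M → N → ℝ) (hmem : (bs, ps) ∈ S) :
    ((∀ q ∈ S, reducedCost c P Po I lam T bs ps ≤ reducedCost c P Po I lam T q.1 q.2)
      ↔ ((∀ n, 0 ≤ max (-(remEnergy P Po I ps n)) 0) ∧
         (∀ n, bs n * ((∑ m, ps m n * P n) + Po n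
            - max (-(remEnergy P Po I ps n)) 0 - I n) ≤ 0) ∧
         (∀ q ∈ S, ∀ Pg : N → ℝ, (∀ n, 0 ≤ Pg n) →
            (∀ n, q.1 n * ((∑ m, q.2 m n * P n) + Po n - Pg n - I n) ≤ 0) →
            deployCost c lam T bs (fun n => max (-(remEnergy P Po I ps n)) 0)
              ≤ deployCost c lam T q.1 Pg)))
    ∧ reducedCost c P Po I lam T bs ps
      = deployCost c lam T bs (fun n => max (-(remEnergy P Po I ps n)) 0) :=
  reduced_problem_equiv_general c P Po I lam T hlamT S hSbin bs ps hmem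
end
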